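/- With ψ(z, μ, θ) = φ_H(1 − z, 1 − μ, θ) as defined from Hoeffding's exponent, for 0 < μ < z < 1 the partial derivative of ψ(z, μ, θ) with respect to θ is ≤ 0 for all θ ∈ (0, 1). -/

import Mathlib

/-! With `d = ν(ν - z)` and `s = ν² + θ` one has `1 - zν/s = (θ + d)/s`, and
`∂φ_H/∂θ = zν/s² · log (ν(θ + d)/(zθ)) - d/(sθ)`. Bounding the logarithm by `x - 1` makes the
right-hand side vanish identically, because `ν(θ + d) - zθ = (ν - z)s`. -/

open Real

noncomputable def phiH (z ν θ : ℝ) : ℝ :=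
  (1 - z * ν / (ν ^ 2 + θ)) * Real.log ((θ + ν * (ν - z)) / θ) +
    (z * ν / (ν ^ 2 + θ)) * Real.log (z / ν)

noncomputable def psiH (z ν θ : ℝ) : ℝ := phiH (1 - z) (1 - ν) θ

theorem hasDerivAt_phiH_theta {z ν θ : ℝ} (hθ : θ ≠ 0) (hd : θ + ν * (ν - z) ≠ 0)
    (hs : ν ^ 2 + θ ≠ 0) :
    HasDerivAt (fun t => phiH z ν t)
      (z * ν / (ν ^ 2 + θ) ^ 2 * (log ((θ + ν * (ν - z)) / θ) - log (z / ν))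
        - (1 - z * ν / (ν ^ 2 + θ)) * (ν * (ν - z) / (θ * (θ + ν * (ν - z))))) θ := by
  have hw : HasDerivAt (fun t => z * ν / (ν ^ 2 + t))
      ((0 * (ν ^ 2 + θ) - z * ν * 1) / (ν ^ 2 + θ) ^ 2) θ :=
    (hasDerivAt_const θ (z * ν)).div ((hasDerivAt_id θ).const_add (ν ^ 2)) hs
  have hL : HasDerivAt (fun t => log ((t + ν * (ν - z)) / t))
      ((1 * θ - (θ + ν * (ν - z)) * 1) / θ ^ 2 / ((θ + ν * (ν - z)) / θ)) θ :=
    (((hasDerivAt_id θ).add_const _).div (hasDerivAt_id θ) hθ).log (div_ne_zero hd hθ)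
  refine (((hw.const_sub 1).fun_mul hL).fun_add (hw.mul_const (log (z / ν)))).congr_deriv ?_
  field_simp
  ring

theorem deriv_phiH_theta_nonpos {z ν θ : ℝ} (hz : 0 < z) (hzν : z < ν) (hθ : 0 < θ) :
    deriv (fun t => phiH z ν t) θ ≤ 0 := by
  have hν : 0 < ν := hz.trans hzν
  have hd : 0 < ν * (ν - z) := mul_pos hν (sub_pos.2 hzν)
  rw [(hasDerivAt_phiH_theta hθ.ne' (by positivity) (by positivity)).deriv]
  have hlog : log ((θ + ν * (ν - z)) / θ) - log (z / ν)
      ≤ ν * (θ + ν * (ν - z)) / (z * θ) - 1 := by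
    rw [← log_div (by positivity) (by positivity)]
    convert log_le_sub_one_of_pos (x := ν * (θ + ν * (ν - z)) / (z * θ)) (by positivity) using 2
    field_simp
  calc _ ≤ z * ν / (ν ^ 2 + θ) ^ 2 * (ν * (θ + ν * (ν - z)) / (z * θ) - 1)
        - (1 - z * ν / (ν ^ 2 + θ)) * (ν * (ν - z) / (θ * (θ + ν * (ν - z)))) := by gcongr
    _ = 0 := by field_simp; ring

theorem psiH_deriv_theta_nonpos (z μ θ : ℝ) (hμz : μ < z) (hz : z < 1)
    (hθ0 : 0 < θ) :
    deriv (fun t : ℝ => psiH z μ t) θ ≤ 0 :=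
  deriv_phiH_theta_nonpos (by linarith) (by linarith) hθ0
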